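/- For a smooth divergence-free vector field v on R^2 decaying at infinity, the integral ∫_{R^2} ∂_i v_j ∂_i v_k ∂_k v_j dS vanishes. -/
import Mathlib

open MeasureTheory Filter

noncomputable section

abbrev R2 := EuclideanSpace ℝ (Fin 2)

def pd2 (i : Fin 2) (f : R2 → ℝ) (x : R2) : ℝ :=
  fderiv ℝ f x (EuclideanSpace.single i 1)

/-- For a smooth divergence-free decaying vector field on `ℝ²`, the cubic
gradient integral `∫ ∂_i v_j ∂_i v_k ∂_k v_j dS` vanishes. -/
theorem cubic_gradient_integral_zero_2d
    (v : R2 → R2) (hv : ContDiff ℝ (⊤ : ℕ∞) v)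
    (hdiv : ∀ x, pd2 0 (fun y => v y 0) x + pd2 1 (fun y => v y 1) x = 0)
    (hdecay : Tendsto v (cocompact R2) (nhds 0))
    (hdecay' : ∀ i j, Tendsto (fun x => pd2 i (fun y => v y j) x) (cocompact R2) (nhds 0))
    (hint : Integrable (fun x => ∑ i, ∑ j, ∑ k,
      pd2 i (fun y => v y j) x * pd2 i (fun y => v y k) x * pd2 k (fun y => v y j) x)) :
    ∫ x, ∑ i, ∑ j, ∑ k,
      pd2 i (fun y => v y j) x * pd2 i (fun y => v y k) x * pd2 k (fun y => v y j) x = 0 := by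
  have h0 : ∀ x : R2, (∑ i, ∑ j, ∑ k,
      pd2 i (fun y => v y j) x * pd2 i (fun y => v y k) x * pd2 k (fun y => v y j) x) = 0 := by
    intro x
    have h := hdiv x
    set a := pd2 0 (fun y => v y 0) x with ha
    set b := pd2 0 (fun y => v y 1) x with hb
    set c := pd2 1 (fun y => v y 0) x with hc
    set d := pd2 1 (fun y => v y 1) x with hd
    simp only [Fin.sum_univ_two]
    linear_combination (a^2 + b^2 + c^2 + d^2 - a*d + b*c) * h
  simp only [h0, integral_zero]
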